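/- arXiv:2303.06759 — 5 statements merged into one kernel-verified Lean document; each statement's English description precedes it below -/
import Mathlib

section
/- Let p₀, p₁, …, p_{n+1} be points in ℝ^d with p₁, …, p_n obtained by projecting p₀ onto regions R₁, …, R_n (so ‖pᵢ − p₀‖ ≤ dist(p₀, Rᵢ)). If OPT is the length of any tour q₀ = p₀, q₁ ∈ R₁, …, q_n ∈ R_n, q_{n+1} = p_{n+1}, then ∑_{i=0}^{n} ‖p_{i+1} − p_i‖ ≤ (2n+1)·OPT, where OPT = ∑_{i=0}^{n} ‖q_{i+1} − q_i‖. -/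
/-!
Every point of the projection tour lies within `OPT` of `p₀`: a projection `pᵢ` is no farther from
`p₀` than the optimal tour's point `qᵢ ∈ Rᵢ`, which is reached from `q₀ = p₀` along a prefix of the
optimal tour. By the triangle inequality through `p₀` the first leg costs at most `OPT` and each of
the other `n` legs at most `2 · OPT`.
-/

open Finset

section PseudoMetricSpace

variable {α : Type*} [PseudoMetricSpace α]

theorem dist_le_sum_range_dist_of_le (f : ℕ → α) {k m : ℕ} (hkm : k ≤ m) :
    dist (f 0) (f k) ≤ ∑ i ∈ range m, dist (f i) (f (i + 1)) :=
  (dist_le_range_sum_dist f k).trans <|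
    sum_le_sum_of_subset_of_nonneg (range_subset_range.2 hkm) fun _ _ _ => dist_nonneg

theorem sum_range_dist_le_of_forall_dist_le (f : ℕ → α) (n : ℕ) {L : ℝ}
    (hL : ∀ j, 1 ≤ j → j ≤ n + 1 → dist (f 0) (f j) ≤ L) :
    ∑ i ∈ range (n + 1), dist (f i) (f (i + 1)) ≤ (2 * n + 1) * L := by
  have hleg : ∀ i ∈ range n, dist (f (i + 1)) (f (i + 2)) ≤ 2 * L := fun i hi => by
    have hi : i < n := mem_range.1 hi
    calc dist (f (i + 1)) (f (i + 2)) ≤ dist (f 0) (f (i + 1)) + dist (f 0) (f (i + 2)) :=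
          dist_triangle_left _ _ _
      _ ≤ L + L := add_le_add (hL _ (by omega) (by omega)) (hL _ (by omega) (by omega))
      _ = 2 * L := by ring
  calc ∑ i ∈ range (n + 1), dist (f i) (f (i + 1))
      = ∑ i ∈ range n, dist (f (i + 1)) (f (i + 2)) + dist (f 0) (f 1) := sum_range_succ' _ _
    _ ≤ ∑ _i ∈ range n, 2 * L + L := add_le_add (sum_le_sum hleg) (hL 1 le_rfl (by omega))
    _ = (2 * n + 1) * L := by rw [sum_const, card_range, nsmul_eq_mul]; ring

end PseudoMetricSpace

theorem trivial_projection_approx_general {d n : ℕ}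
    (R : ℕ → Set (EuclideanSpace ℝ (Fin d)))
    (p q : ℕ → EuclideanSpace ℝ (Fin d))
    (h0 : p 0 = q 0) (hend : p (n + 1) = q (n + 1))
    (hq : ∀ i, 1 ≤ i → i ≤ n → q i ∈ R i)
    (hp : ∀ i, 1 ≤ i → i ≤ n →
      p i ∈ R i ∧ ‖p i - p 0‖ ≤ Metric.infDist (p 0) (R i)) :
    ∑ i ∈ Finset.range (n + 1), ‖p (i + 1) - p i‖ ≤
      (2 * n + 1) * ∑ i ∈ Finset.range (n + 1), ‖q (i + 1) - q i‖ := by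
  simp_rw [← dist_eq_norm']
  refine sum_range_dist_le_of_forall_dist_le p n fun j hj1 hjn => ?_
  rcases hjn.lt_or_eq with hjn | rfl
  · have hjn : j ≤ n := Nat.lt_succ_iff.1 hjn
    calc dist (p 0) (p j) ≤ Metric.infDist (p 0) (R j) := by
          rw [dist_eq_norm']; exact (hp j hj1 hjn).2
      _ ≤ dist (q 0) (q j) := h0 ▸ Metric.infDist_le_dist_of_mem (hq j hj1 hjn)
      _ ≤ _ := dist_le_sum_range_dist_of_le q (Nat.le_succ_of_le hjn)
  · rw [h0, hend]
    exact dist_le_sum_range_dist_of_le q le_rfl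

/-- The trivial `(2n+1)`-approximation: projecting the starting point onto each
region yields a tour of length at most `(2n+1)` times the optimum. -/
theorem trivial_projection_approx {d n : ℕ}
    (R : ℕ → Set (EuclideanSpace ℝ (Fin d)))
    (hRne : ∀ i, 1 ≤ i → i ≤ n → (R i).Nonempty)
    (hRcl : ∀ i, 1 ≤ i → i ≤ n → IsClosed (R i))
    (p q : ℕ → EuclideanSpace ℝ (Fin d))
    (h0 : p 0 = q 0) (hend : p (n + 1) = q (n + 1))
    (hq : ∀ i, 1 ≤ i → i ≤ n → q i ∈ R i)
    (hp : ∀ i, 1 ≤ i → i ≤ n →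
      p i ∈ R i ∧ ‖p i - p 0‖ ≤ Metric.infDist (p 0) (R i)) :
    ∑ i ∈ Finset.range (n + 1), ‖p (i + 1) - p i‖ ≤
      (2 * n + 1) * ∑ i ∈ Finset.range (n + 1), ‖q (i + 1) - q i‖ :=
  trivial_projection_approx_general R p q h0 hend hq hp
end

section
/- For p₀ = (−1, 1), p₂ = (1, 1), and any d with 0 ≤ d ≤ 1, the point p₁' = (d, 0) satisfies ‖p₀ − p₁'‖ + ‖p₁' − p₂‖ ≤ 2√2·(1 + d²). -/
/-! The two distances are `√x` and `√y` with `x + y = 8 + 4d²`, and `√x + √y ≤ √(2(x + y))`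
by the quadratic-mean inequality `(a + b)² ≤ 2(a² + b²)`; finally `8 + 4d² ≤ 8(1 + d²)²`. -/

theorem Real.sqrt_add_sqrt_le_sqrt_two_mul_add {x y : ℝ} (hx : 0 ≤ x) (hy : 0 ≤ y) :
    √x + √y ≤ √(2 * (x + y)) := by
  apply Real.le_sqrt_of_sq_le
  calc (√x + √y) ^ 2 ≤ 2 * (√x ^ 2 + √y ^ 2) := add_sq_le
    _ = 2 * (x + y) := by rw [Real.sq_sqrt hx, Real.sq_sqrt hy]

theorem EuclideanSpace.norm_equiv_symm_sub_fin_two (a b c d : ℝ) :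
    ‖(WithLp.equiv 2 (Fin 2 → ℝ)).symm ![a, b] - (WithLp.equiv 2 (Fin 2 → ℝ)).symm ![c, d]‖ =
      √((a - c) ^ 2 + (b - d) ^ 2) := by
  simp [EuclideanSpace.norm_eq, Fin.sum_univ_two]

theorem reflection_perturbation_bound_general (d : ℝ) :
    ‖(WithLp.equiv 2 (Fin 2 → ℝ)).symm ![(-1 : ℝ), 1] -
        (WithLp.equiv 2 (Fin 2 → ℝ)).symm ![d, 0]‖ +
      ‖(WithLp.equiv 2 (Fin 2 → ℝ)).symm ![d, 0] -
        (WithLp.equiv 2 (Fin 2 → ℝ)).symm ![(1 : ℝ), 1]‖ ≤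
      2 * Real.sqrt 2 * (1 + d ^ 2) := by
  rw [EuclideanSpace.norm_equiv_symm_sub_fin_two, EuclideanSpace.norm_equiv_symm_sub_fin_two]
  calc _ ≤ √(2 * (((-1 - d) ^ 2 + (1 - 0) ^ 2) + ((d - 1) ^ 2 + (0 - 1) ^ 2))) :=
        Real.sqrt_add_sqrt_le_sqrt_two_mul_add (by positivity) (by positivity)
    _ ≤ 2 * √2 * (1 + d ^ 2) := by
        rw [Real.sqrt_le_left (by positivity), mul_pow, mul_pow, Real.sq_sqrt zero_le_two]
        nlinarith [sq_nonneg d, sq_nonneg (d ^ 2)]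

/-- Perturbing the optimal reflection point `(0,0)` to `(d,0)` with `0 ≤ d ≤ 1`
incurs only `O(d²)` multiplicative error:
`‖p₀ - (d,0)‖ + ‖(d,0) - p₂‖ ≤ 2√2 (1 + d²)`. -/
theorem reflection_perturbation_bound (d : ℝ) (hd0 : 0 ≤ d) (hd1 : d ≤ 1) :
    ‖(WithLp.equiv 2 (Fin 2 → ℝ)).symm ![(-1 : ℝ), 1] -
        (WithLp.equiv 2 (Fin 2 → ℝ)).symm ![d, 0]‖ +
      ‖(WithLp.equiv 2 (Fin 2 → ℝ)).symm ![d, 0] -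
        (WithLp.equiv 2 (Fin 2 → ℝ)).symm ![(1 : ℝ), 1]‖ ≤
      2 * Real.sqrt 2 * (1 + d ^ 2) :=
  reflection_perturbation_bound_general d
end

section
/- Let C(q, m) be the closed disk of radius m centered at q in ℝ², and let R = C(r, ρ) be a closed disk with ρ ≥ 10m and q ∈ R. Then area(C(q, m) ∩ R) ≥ (arccos(1/20)/π) · area(C(q, m)). -/
/-!
The sector of `C(q, m)` of half-angle `θ = arccos (1/20)` pointing from `q` towards `r` lies in
`R`: a point of it at distance `t ≤ m ≤ ρ/10` from `q` has squared distance at most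
`t² - d t / 10 + d²` from `r`, where `d = ‖r - q‖ ≤ ρ`, and this convex function of `d` is at most
`ρ²` at `d = 0` and at `d = ρ`. In polar coordinates the sector has area `θ m²`, the fraction
`θ / π` of the disk.
-/

open MeasureTheory Real Set Metric Module
open scoped RealInnerProductSpace

lemma Real.le_cos_iff_abs_le_arccos {c φ : ℝ} (hc₁ : -1 ≤ c) (hc₂ : c ≤ 1) (hφ : |φ| ≤ π) :
    c ≤ cos φ ↔ |φ| ≤ arccos c := by
  rw [← cos_abs,
    ← strictAntiOn_cos.le_iff_ge ⟨arccos_nonneg c, arccos_le_pi c⟩ ⟨abs_nonneg φ, hφ⟩,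
    cos_arccos hc₁ hc₂]

section Sector

variable {E F : Type*} [NormedAddCommGroup E] [InnerProductSpace ℝ E]
  [NormedAddCommGroup F] [InnerProductSpace ℝ F]

/-- For a unit vector `u`, the closed sector of radius `m` at `x` of half-angle `arccos c` around
the direction `u`. -/
def closedSector (x u : E) (m c : ℝ) : Set E :=
  {a | ‖a - x‖ ≤ m ∧ c * ‖a - x‖ ≤ ⟪a - x, u⟫}

theorem isClosed_closedSector (x u : E) (m c : ℝ) : IsClosed (closedSector x u m c) :=
  have h : Continuous fun a : E ↦ a - x := by fun_prop
  (isClosed_le h.norm continuous_const).inter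
    (isClosed_le (continuous_const.mul h.norm) (h.inner continuous_const))

theorem closedSector_subset_closedBall (x u : E) (m c : ℝ) :
    closedSector x u m c ⊆ closedBall x m :=
  fun _ ha ↦ mem_closedBall_iff_norm.2 ha.1

theorem preimage_closedSector (g : F →ₗᵢ[ℝ] E) (x : E) (u : F) (m c : ℝ) :
    (fun z ↦ g z + x) ⁻¹' closedSector x (g u) m c = closedSector 0 u m c := by
  ext z
  simp [closedSector, g.norm_map, g.inner_map_map]

theorem closedSector_subset_closedBall_of_le {q r u : E} {m ρ c : ℝ}
    (hu : r - q = ‖r - q‖ • u) (hc : c ≤ 1 / 2) (hmρ : m ≤ 2 * c * ρ) (hq : ‖q - r‖ ≤ ρ) :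
    closedSector q u m c ⊆ closedBall r ρ := by
  rintro a ⟨hm, hinner⟩
  have ht : 0 ≤ ‖a - q‖ := norm_nonneg _
  have hd : ‖r - q‖ ≤ ρ := by rwa [norm_sub_rev] at hq
  have hρ : 0 ≤ ρ := (norm_nonneg _).trans hd
  have hc_mul (s : ℝ) (hs : 0 ≤ s) : c * s ≤ s / 2 := by nlinarith
  have hsq : ‖a - r‖ ^ 2 = ‖a - q‖ ^ 2 - 2 * ‖r - q‖ * ⟪a - q, u⟫ + ‖r - q‖ ^ 2 := by
    have : ⟪a - q, r - q⟫ = ‖r - q‖ * ⟪a - q, u⟫ := by rw [← inner_smul_right, ← hu]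
    rw [show a - r = (a - q) - (r - q) by abel, norm_sub_sq_real, this, mul_assoc]
  -- `ρ² - ‖a - r‖² ≥ (ρ - d)(ρ + d - 2ct) + t(2cρ - t)` with `d = ‖r - q‖` and `t = ‖a - q‖`.
  rw [mem_closedBall_iff_norm]
  have hslack : 0 ≤ ρ + ‖r - q‖ - 2 * c * ‖a - q‖ := by
    nlinarith [hc_mul _ ht, hc_mul _ hρ, norm_nonneg (r - q)]
  nlinarith [norm_nonneg (a - r), norm_nonneg (r - q), mul_nonneg (sub_nonneg.2 hd) hslack,
    mul_nonneg ht (by linarith : 0 ≤ 2 * c * ρ - ‖a - q‖)]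

theorem Complex.polarCoord_symm_mem_closedSector_iff {m c : ℝ} (hc₁ : -1 ≤ c) (hc₂ : c ≤ 1)
    {p : ℝ × ℝ} (hp : p ∈ polarCoord.target) :
    Complex.polarCoord.symm p ∈ closedSector 0 1 m c ↔
      p ∈ Ioc 0 m ×ˢ Icc (-arccos c) (arccos c) := by
  obtain ⟨R, φ⟩ := p
  obtain ⟨hR, hφ₁, hφ₂⟩ : 0 < R ∧ -π < φ ∧ φ < π := by simpa [polarCoord_target] using hp
  have hφ : |φ| ≤ π := abs_le.2 ⟨hφ₁.le, hφ₂.le⟩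
  have hnorm : ‖Complex.polarCoord.symm (R, φ)‖ = R := by simp [hR.le]
  have hinner : ⟪Complex.polarCoord.symm (R, φ), 1⟫ = R * Real.cos φ := by
    simp [Complex.inner, Complex.cos_ofReal_re]
  simp only [closedSector, sub_zero, hnorm, hinner, mem_ofPred_eq, mem_prod, mem_Ioc, mem_Icc,
    ← abs_le, ← le_cos_iff_abs_le_arccos hc₁ hc₂ hφ, hR, true_and, mul_comm c,
    mul_le_mul_iff_right₀ hR]

theorem Complex.volume_closedSector {m c : ℝ} (hm : 0 ≤ m) (hc₁ : -1 < c) (hc₂ : c ≤ 1) :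
    volume (closedSector (0 : ℂ) 1 m c) = ENNReal.ofReal (arccos c * m ^ 2) := by
  set S := closedSector (0 : ℂ) 1 m c
  set θ := arccos c
  set A := Ioc 0 m ×ˢ Icc (-θ) θ
  have hA : A ⊆ polarCoord.target := by
    have : θ < π := arccos_lt_pi.2 hc₁
    exact prod_mono Ioc_subset_Ioi_self (Icc_subset_Ioo (by linarith [arccos_nonneg c]) this)
  have hS : volume.real S = ∫ p in A, p.1 := by
    rw [← integral_indicator_one (isClosed_closedSector 0 1 m c).measurableSet,
      ← Complex.integral_comp_polarCoord_symm, ← inter_eq_self_of_subset_right hA,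
      ← setIntegral_indicator (measurableSet_Ioc.prod measurableSet_Icc)]
    refine setIntegral_congr_fun polarCoord.open_target.measurableSet fun p hp ↦ ?_
    by_cases hpA : p ∈ A
    · rw [indicator_of_mem hpA, indicator_of_mem
        ((Complex.polarCoord_symm_mem_closedSector_iff hc₁.le hc₂ hp).2 hpA), Pi.one_apply,
        smul_eq_mul, mul_one]
    · rw [indicator_of_notMem hpA, indicator_of_notMem
        (mt (Complex.polarCoord_symm_mem_closedSector_iff hc₁.le hc₂ hp).1 hpA), smul_zero]
  have hprod : ∫ p in A, p.1 = (∫ x in Ioc 0 m, x) * ∫ _ in Icc (-θ) θ, (1 : ℝ) := by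
    have := setIntegral_prod_mul (μ := volume) (ν := volume) (fun x : ℝ ↦ x)
      (fun _ : ℝ ↦ (1 : ℝ)) (Ioc 0 m) (Icc (-θ) θ)
    simpa only [mul_one, ← Measure.volume_eq_prod] using this
  have hfin : volume S ≠ ⊤ :=
    ((measure_mono (closedSector_subset_closedBall 0 1 m c)).trans_lt measure_closedBall_lt_top).ne
  rw [← ofReal_measureReal hfin, hS, hprod, ← intervalIntegral.integral_of_le hm, integral_id,
    setIntegral_const, Real.volume_real_Icc_of_le (by linarith [arccos_nonneg c])]
  congr 1
  simp only [smul_eq_mul]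
  ring

theorem exists_norm_eq_one_and_eq_norm_smul [Nontrivial E] (v : E) :
    ∃ u : E, ‖u‖ = 1 ∧ v = ‖v‖ • u := by
  rcases eq_or_ne v 0 with rfl | hv
  · obtain ⟨u, hu⟩ := exists_norm_eq E zero_le_one
    exact ⟨u, hu, by simp⟩
  · exact ⟨‖v‖⁻¹ • v, norm_smul_inv_norm hv, by
      rw [smul_smul, mul_inv_cancel₀ (norm_ne_zero_iff.2 hv), one_smul]⟩

theorem exists_linearIsometryEquiv_complex_apply_one (hE : finrank ℝ E = 2) {u : E}
    (hu : ‖u‖ = 1) : ∃ g : ℂ ≃ₗᵢ[ℝ] E, g 1 = u := by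
  have : FiniteDimensional ℝ E := Module.finite_of_finrank_eq_succ hE
  let e := Complex.isometryOfOrthonormal ((stdOrthonormalBasis ℝ E).reindex (finCongr hE))
  have he : ‖e 1‖ = ‖u‖ := by rw [e.norm_map, norm_one, hu]
  exact ⟨e.trans (ℝ ∙ (e 1 - u))ᗮ.reflection, Submodule.reflection_sub he⟩

theorem volume_closedSector [FiniteDimensional ℝ E] [MeasurableSpace E] [BorelSpace E]
    (hE : finrank ℝ E = 2) (x : E) {u : E} (hu : ‖u‖ = 1) {m c : ℝ} (hm : 0 ≤ m) (hc₁ : -1 < c)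
    (hc₂ : c ≤ 1) : volume (closedSector x u m c) = ENNReal.ofReal (arccos c * m ^ 2) := by
  obtain ⟨g, rfl⟩ := exists_linearIsometryEquiv_complex_apply_one hE hu
  have hg : MeasurePreserving (fun z ↦ g z + x) :=
    (measurePreserving_add_right volume x).comp g.measurePreserving
  rw [← hg.measure_preimage (isClosed_closedSector _ _ _ _).measurableSet.nullMeasurableSet,
    ← g.coe_toLinearIsometry, preimage_closedSector, Complex.volume_closedSector hm hc₁ hc₂]

end Sector

/-- Area of intersection of a small disk with a big disk containing its center:
if `ρ ≥ 10m` and `q ∈ C(r, ρ)`, then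
`area(C(q,m) ∩ C(r,ρ)) ≥ (arccos(1/20)/π) · area(C(q,m))`. -/
theorem disk_intersection_area (q r : EuclideanSpace ℝ (Fin 2)) (m ρ : ℝ)
    (hm : 0 < m) (hρ : 10 * m ≤ ρ) (hq : ‖q - r‖ ≤ ρ) :
    ENNReal.ofReal (Real.arccos (1 / 20) / Real.pi) *
        MeasureTheory.volume (Metric.closedBall q m) ≤
      MeasureTheory.volume (Metric.closedBall q m ∩ Metric.closedBall r ρ) := by
  obtain ⟨u, hu, hru⟩ := exists_norm_eq_one_and_eq_norm_smul (r - q)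
  have hdisk : ENNReal.ofReal (arccos (1 / 20) / π) * volume (closedBall q m) =
      ENNReal.ofReal (arccos (1 / 20) * m ^ 2) := by
    rw [EuclideanSpace.volume_closedBall_fin_two, ← ENNReal.ofReal_pow hm.le,
      ← ENNReal.ofReal_mul (by positivity),
      ← ENNReal.ofReal_mul (div_nonneg (arccos_nonneg _) pi_pos.le)]
    congr 1
    field_simp
  calc ENNReal.ofReal (arccos (1 / 20) / π) * volume (closedBall q m)
      = volume (closedSector q u m (1 / 20)) := by
        rw [hdisk, volume_closedSector finrank_euclideanSpace_fin q hu hm.le (by norm_num)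
          (by norm_num)]
    _ ≤ volume (closedBall q m ∩ closedBall r ρ) :=
        measure_mono (subset_inter (closedSector_subset_closedBall q u m _)
          (closedSector_subset_closedBall_of_le hru (by norm_num) (by linarith) hq))
end

section
/- For every n ≥ 1 there exist x₁, …, x_n ∈ [0, 8] such that the disks D_i of radius 1/i tangent to the x-axis from above at (x_i, 1/i) (i.e., centered at (x_i, 1/i)) are pairwise disjoint. -/
/-!
Disks of radii `r, s` tangent to the x-axis from above at abscissas `x, y` are disjoint as soon
as `4 r s ≤ (x - y)²`. Place the disks greedily: the abscissa of the disk of radius `rᵢ = 1/(i+1)`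
must avoid the intervals of radius `2√(rᵢ rⱼ)` around the earlier abscissas. Their total length
is `(4/√(i+1)) ∑_{j ≤ i} 1/√j < 8`, so they cannot cover `[0, 8]`.
-/
open Function MeasureTheory Metric Finset Real

def tangentDisk (x r : ℝ) : Set (EuclideanSpace ℝ (Fin 2)) :=
  ball ((WithLp.equiv 2 (Fin 2 → ℝ)).symm ![x, r]) r

theorem disjoint_tangentDisk_of_four_mul_le_sq {x y r s : ℝ} (h : 4 * r * s ≤ (x - y) ^ 2) :
    Disjoint (tangentDisk x r) (tangentDisk y s) := by
  refine ball_disjoint_ball ?_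
  rw [EuclideanSpace.dist_eq, Fin.sum_univ_two]
  simp only [WithLp.equiv_symm_apply, WithLp.ofLp_toLp, Matrix.cons_val_zero, Matrix.cons_val_one,
    Real.dist_eq, sq_abs]
  calc r + s ≤ |r + s| := le_abs_self _
    _ = √((r + s) ^ 2) := (sqrt_sq_eq_abs _).symm
    _ ≤ √((x - y) ^ 2 + (r - s) ^ 2) := sqrt_le_sqrt (by nlinarith)

theorem sum_range_inv_sqrt_succ_le (n : ℕ) : ∑ k ∈ range n, (√(k + 1))⁻¹ ≤ 2 * √n := by
  induction n with
  | zero => simp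
  | succ n ih =>
    have hn := sq_sqrt (Nat.cast_nonneg (α := ℝ) n)
    have hn1 := sq_sqrt (by positivity : (0 : ℝ) ≤ n + 1)
    have hstep : (√(n + 1))⁻¹ ≤ 2 * √(n + 1) - 2 * √n := by
      rw [inv_le_iff_one_le_mul₀' (by positivity)]
      nlinarith [sq_nonneg (√(n + 1) - √n)]
    rw [sum_range_succ]
    push_cast
    linarith

theorem sum_range_four_mul_sqrt_lt_eight (i : ℕ) :
    ∑ j ∈ range i, 4 * √(1 / (i + 1 : ℝ) * (1 / (j + 1))) < 8 := by
  calc ∑ j ∈ range i, 4 * √(1 / (i + 1 : ℝ) * (1 / (j + 1)))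
      = 4 * (√(i + 1))⁻¹ * ∑ j ∈ range i, (√(j + 1))⁻¹ := by
        rw [mul_sum]
        refine sum_congr rfl fun j _ => ?_
        rw [sqrt_mul (by positivity), one_div, one_div, sqrt_inv, sqrt_inv, mul_assoc]
    _ ≤ 4 * (√(i + 1))⁻¹ * (2 * √i) := by gcongr; exact sum_range_inv_sqrt_succ_le i
    _ = 8 * (√i / √(i + 1)) := by ring
    _ < 8 := by
        have hi : √(i : ℝ) / √(i + 1) < 1 :=
          (div_lt_one (by positivity)).2 (sqrt_lt_sqrt (by positivity) (by linarith))
        linarith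

theorem exists_mem_Icc_forall_lt_abs_sub {ι : Type*} (s : Finset ι) (c δ : ι → ℝ) {a b : ℝ}
    (hδ : ∀ j ∈ s, 0 ≤ δ j) (hsum : ∑ j ∈ s, 2 * δ j < b - a) :
    ∃ p ∈ Set.Icc a b, ∀ j ∈ s, δ j < |p - c j| := by
  by_contra! hcover
  have hsub : Set.Icc a b ⊆ ⋃ j ∈ s, closedBall (c j) (δ j) := fun p hp => by
    obtain ⟨j, hj, hpj⟩ := hcover p hp
    exact Set.mem_biUnion hj (by rwa [mem_closedBall, Real.dist_eq])
  have hlt : volume (Set.Icc a b) < volume (Set.Icc a b) := calc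
    volume (Set.Icc a b) ≤ volume (⋃ j ∈ s, closedBall (c j) (δ j)) := measure_mono hsub
    _ ≤ ∑ j ∈ s, volume (closedBall (c j) (δ j)) := measure_biUnion_finset_le _ _
    _ = ENNReal.ofReal (∑ j ∈ s, 2 * δ j) := by
        simp only [Real.volume_closedBall]
        rw [ENNReal.ofReal_sum_of_nonneg fun j hj => by linarith [hδ j hj]]
    _ < ENNReal.ofReal (b - a) :=
        (ENNReal.ofReal_lt_ofReal_iff_of_nonneg (sum_nonneg fun j hj => by linarith [hδ j hj])).2
          hsum
    _ = volume (Set.Icc a b) := Real.volume_Icc.symm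
  exact hlt.false

theorem exists_abscissas_four_mul_le_sq (r : ℕ → ℝ) {a b : ℝ}
    (hsum : ∀ i, ∑ j ∈ range i, 4 * √(r i * r j) < b - a) (n : ℕ) :
    ∃ x : ℕ → ℝ, ∀ i < n, x i ∈ Set.Icc a b ∧ ∀ j < i, 4 * r i * r j ≤ (x i - x j) ^ 2 := by
  induction n with
  | zero => exact ⟨0, fun i hi => absurd hi i.not_lt_zero⟩
  | succ n ih =>
    obtain ⟨x, hx⟩ := ih
    obtain ⟨p, hpI, hpx⟩ := exists_mem_Icc_forall_lt_abs_sub (range n) x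
      (fun j => 2 * √(r n * r j)) (fun j _ => by positivity)
      (by simpa only [← mul_assoc, show (2 : ℝ) * 2 = 4 by norm_num] using hsum n)
    refine ⟨update x n p, fun i hi => ?_⟩
    rcases Nat.lt_succ_iff_lt_or_eq.1 hi with hin | rfl
    · rw [update_of_ne hin.ne]
      refine ⟨(hx i hin).1, fun j hji => ?_⟩
      rw [update_of_ne (hji.trans hin).ne]
      exact (hx i hin).2 j hji
    · refine ⟨by rwa [update_self], fun j hji => ?_⟩
      rw [update_self, update_of_ne hji.ne]
      have hfar : 2 * √(r i * r j) < |p - x j| := hpx j (mem_range.2 hji)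
      have hsq : r i * r j < (|p - x j| / 2) ^ 2 :=
        (sqrt_lt' (by linarith [sqrt_nonneg (r i * r j)])).1 (by linarith)
      rw [div_pow, sq_abs] at hsq
      linarith

theorem tangent_disks_construction_general (n : ℕ) :
    ∃ x : Fin n → ℝ, (∀ i, x i ∈ Set.Icc (0 : ℝ) 8) ∧
      Pairwise fun i j : Fin n =>
        Disjoint
          (Metric.ball ((WithLp.equiv 2 (Fin 2 → ℝ)).symm
            ![x i, 1 / ((i : ℕ) + 1 : ℝ)]) (1 / ((i : ℕ) + 1 : ℝ)))
          (Metric.ball ((WithLp.equiv 2 (Fin 2 → ℝ)).symm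
            ![x j, 1 / ((j : ℕ) + 1 : ℝ)]) (1 / ((j : ℕ) + 1 : ℝ))) := by
  obtain ⟨x, hx⟩ := exists_abscissas_four_mul_le_sq (fun k : ℕ => 1 / (k + 1 : ℝ)) (a := 0)
    (b := 8) (fun i => by simpa only [sub_zero] using sum_range_four_mul_sqrt_lt_eight i) n
  refine ⟨fun i => x i, fun i => (hx i i.isLt).1,
    Pairwise.of_gt (p := Disjoint on fun i : Fin n => tangentDisk (x i) (1 / ((i : ℕ) + 1 : ℝ)))
      fun i j hji => disjoint_tangentDisk_of_four_mul_le_sq ((hx i i.isLt).2 j hji)⟩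

/-- For every `n ≥ 1` there are abscissas `x₁, …, xₙ ∈ [0,8]` such that the disks
of radius `1/i` tangent to the x-axis from above at `(xᵢ, 1/i)` (centered at
`(xᵢ, 1/i)`) are pairwise disjoint (have pairwise disjoint interiors). -/
theorem tangent_disks_construction (n : ℕ) (hn : 1 ≤ n) :
    ∃ x : Fin n → ℝ, (∀ i, x i ∈ Set.Icc (0 : ℝ) 8) ∧
      Pairwise fun i j : Fin n =>
        Disjoint
          (Metric.ball ((WithLp.equiv 2 (Fin 2 → ℝ)).symm
            ![x i, 1 / ((i : ℕ) + 1 : ℝ)]) (1 / ((i : ℕ) + 1 : ℝ)))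
          (Metric.ball ((WithLp.equiv 2 (Fin 2 → ℝ)).symm
            ![x j, 1 / ((j : ℕ) + 1 : ℝ)]) (1 / ((j : ℕ) + 1 : ℝ))) :=
  tangent_disks_construction_general n
end

section
/- Let C be a nonempty closed convex subset of the closed hypercube H = [0, r]^d, let S_H be a finite set of points on ∂H such that every point of ∂H is within distance δ of S_H, and let S = {proj_C(s) : s ∈ S_H}. Then for every p ∈ ∂C there exists p' ∈ S with ‖p − p'‖ ≤ δ. -/
/-!
Let `p ∈ ∂C`. Projections of nearby points outside `C` give, in the limit, a unit
outward normal `v` of `C` at `p`. The ray `p + t v` (`t ≥ 0`) leaves the bounded set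
`H ⊇ C`, so it crosses `∂H` at some `s₀`, and `proj_C s₀ = p` because `s₀ - p` is an
outward normal. A point `s ∈ S_H` with `‖s₀ - s‖ ≤ δ` then works, since `proj_C` is
`1`-Lipschitz.
-/

open Set Filter Topology
open scoped InnerProductSpace

section

variable {E : Type*} [NormedAddCommGroup E]

def IsNearestPointMap (C : Set E) (f : E → E) : Prop :=
  ∀ x, f x ∈ C ∧ ∀ y ∈ C, ‖x - f x‖ ≤ ‖x - y‖

variable [InnerProductSpace ℝ E]

theorem norm_sub_le_of_inner_nonpos {a b u w : E} (hu : ⟪a - u, w - u⟫_ℝ ≤ 0)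
    (hw : ⟪b - w, u - w⟫_ℝ ≤ 0) : ‖u - w‖ ≤ ‖a - b‖ := by
  have key : ‖u - w‖ ^ 2 ≤ ⟪a - b, u - w⟫_ℝ := by
    have expand : ⟪a - b, u - w⟫_ℝ
        = ‖u - w‖ ^ 2 - ⟪a - u, w - u⟫_ℝ - ⟪b - w, u - w⟫_ℝ := by
      rw [← real_inner_self_eq_norm_sq]
      simp only [inner_sub_left, inner_sub_right, real_inner_comm u w]
      ring
    linarith
  rcases (norm_nonneg (u - w)).eq_or_lt with h0 | h0
  · rw [← h0]; exact norm_nonneg _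
  · nlinarith [key.trans (real_inner_le_norm (a - b) (u - w))]

namespace IsNearestPointMap

variable {C : Set E} {f : E → E}

theorem inner_sub_apply_nonpos (hf : IsNearestPointMap C f) (hC : Convex ℝ C) (x : E)
    {y : E} (hy : y ∈ C) : ⟪x - f x, y - f x⟫_ℝ ≤ 0 := by
  have : Nonempty C := ⟨⟨y, hy⟩⟩
  have hbdd : BddBelow (range fun w : C => ‖x - (w : E)‖) :=
    ⟨0, by rintro _ ⟨w, rfl⟩; exact norm_nonneg _⟩
  refine (norm_eq_iInf_iff_real_inner_le_zero hC (hf x).1).mp ?_ y hy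
  exact le_antisymm (le_ciInf fun w => (hf x).2 w w.2) (ciInf_le hbdd ⟨f x, (hf x).1⟩)

theorem norm_apply_sub_apply_le (hf : IsNearestPointMap C f) (hC : Convex ℝ C) (a b : E) :
    ‖f a - f b‖ ≤ ‖a - b‖ :=
  norm_sub_le_of_inner_nonpos (hf.inner_sub_apply_nonpos hC a (hf b).1)
    (hf.inner_sub_apply_nonpos hC b (hf a).1)

theorem continuous (hf : IsNearestPointMap C f) (hC : Convex ℝ C) : Continuous f :=
  (LipschitzWith.of_dist_le_mul (K := 1) fun a b => by
    simpa [dist_eq_norm] using hf.norm_apply_sub_apply_le hC a b).continuous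

theorem apply_eq_of_inner_nonpos (hf : IsNearestPointMap C f) (hC : Convex ℝ C) {p s : E}
    (hp : p ∈ C) (hs : ∀ y ∈ C, ⟪s - p, y - p⟫_ℝ ≤ 0) : f s = p := by
  have := norm_sub_le_of_inner_nonpos (hf.inner_sub_apply_nonpos hC s hp) (hs _ (hf s).1)
  rw [sub_self, norm_zero] at this
  exact sub_eq_zero.mp (norm_le_zero_iff.mp this)

theorem apply_eq_self (hf : IsNearestPointMap C f) (hC : Convex ℝ C) {p : E} (hp : p ∈ C) :
    f p = p :=
  hf.apply_eq_of_inner_nonpos hC hp fun y _ => by simp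

/-- A limit of the unit vectors `(x - f x) / ‖x - f x‖` as `x → p` from outside `C`. -/
theorem exists_unit_normal_of_mem_frontier [ProperSpace E] (hf : IsNearestPointMap C f)
    (hC : Convex ℝ C) {p : E} (hpC : p ∈ C) (hp : p ∈ frontier C) :
    ∃ v : E, ‖v‖ = 1 ∧ ∀ y ∈ C, ⟪v, y - p⟫_ℝ ≤ 0 := by
  have hp' : p ∈ closure Cᶜ := by rw [closure_compl]; exact hp.2
  obtain ⟨x, hxC, hxp⟩ := mem_closure_iff_seq_limit.mp hp'
  have hdisp : ∀ n, x n - f (x n) ≠ 0 := fun n h =>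
    hxC n (sub_eq_zero.mp h ▸ (hf (x n)).1)
  set w : ℕ → E := fun n => ‖x n - f (x n)‖⁻¹ • (x n - f (x n))
  have hw : ∀ n, w n ∈ Metric.sphere (0 : E) 1 := fun n => by
    simpa [w] using norm_smul_inv_norm (𝕜 := ℝ) (hdisp n)
  obtain ⟨v, hv, φ, hφ, hwv⟩ := (isCompact_sphere (0 : E) 1).tendsto_subseq hw
  refine ⟨v, by simpa using hv, fun y hy => ?_⟩
  have hfx : Tendsto (fun n => f (x (φ n))) atTop (𝓝 p) := by
    simpa [hf.apply_eq_self hC hpC, Function.comp_def] using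
      ((hf.continuous hC).tendsto p).comp (hxp.comp hφ.tendsto_atTop)
  refine le_of_tendsto (hwv.inner (tendsto_const_nhds.sub hfx)) (Eventually.of_forall fun n => ?_)
  simp only [Function.comp_apply, w, real_inner_smul_left]
  exact mul_nonpos_of_nonneg_of_nonpos (by positivity) (hf.inner_sub_apply_nonpos hC _ hy)

end IsNearestPointMap

end

theorem exists_nonneg_add_smul_mem_frontier {E : Type*} [NormedAddCommGroup E]
    [NormedSpace ℝ E] {H : Set E} (hH : Bornology.IsBounded H) {p v : E} (hp : p ∈ H)
    (hv : v ≠ 0) : ∃ t : ℝ, 0 ≤ t ∧ p + t • v ∈ frontier H := by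
  have : PreconnectedSpace (Ici (0 : ℝ)) :=
    isPreconnected_iff_preconnectedSpace.mp isPreconnected_Ici
  let g : Ici (0 : ℝ) → E := fun t => p + (t : ℝ) • v
  have hg : Continuous g := by fun_prop
  obtain ⟨R, hR⟩ := hH.subset_closedBall p
  have hleave : g ⁻¹' H ≠ univ := by
    intro h
    have hT : 0 ≤ (|R| + 1) / ‖v‖ := by positivity
    have hmem : (⟨_, hT⟩ : Ici (0 : ℝ)) ∈ g ⁻¹' H := h ▸ mem_univ _
    have hnear := hR hmem
    rw [Metric.mem_closedBall, dist_eq_norm] at hnear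
    simp only [g, add_sub_cancel_left, norm_smul, Real.norm_eq_abs, abs_of_nonneg hT,
      div_mul_cancel₀ _ (norm_ne_zero_iff.mpr hv)] at hnear
    linarith [le_abs_self R]
  have hstart : (⟨0, mem_Ici.2 le_rfl⟩ : Ici (0 : ℝ)) ∈ g ⁻¹' H := by simpa [g] using hp
  obtain ⟨t, ht⟩ := nonempty_frontier_iff.mpr ⟨⟨_, hstart⟩, hleave⟩
  exact ⟨t, t.2, hg.frontier_preimage_subset H ht⟩

theorem IsNearestPointMap.exists_mem_frontier_apply_eq {E : Type*} [NormedAddCommGroup E]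
    [InnerProductSpace ℝ E] [ProperSpace E] {C H : Set E} {f : E → E}
    (hf : IsNearestPointMap C f) (hC : Convex ℝ C) (hCH : C ⊆ H) (hH : Bornology.IsBounded H)
    {p : E} (hpC : p ∈ C) (hp : p ∈ frontier C) : ∃ s ∈ frontier H, f s = p := by
  obtain ⟨v, hv, hvC⟩ := hf.exists_unit_normal_of_mem_frontier hC hpC hp
  obtain ⟨t, ht, hs⟩ :=
    exists_nonneg_add_smul_mem_frontier hH (hCH hpC) (norm_ne_zero_iff.mp (hv ▸ one_ne_zero))
  refine ⟨_, hs, hf.apply_eq_of_inner_nonpos hC hpC fun y hy => ?_⟩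
  rw [add_sub_cancel_left, real_inner_smul_left]
  exact mul_nonpos_of_nonneg_of_nonpos ht (hvC y hy)

theorem isBounded_cube (d : ℕ) (r : ℝ) :
    Bornology.IsBounded {x : EuclideanSpace ℝ (Fin d) | ∀ i, x i ∈ Icc 0 r} :=
  ((PiLp.antilipschitzWith_ofLp 2 _).isBounded_preimage
    (Metric.isBounded_Icc (0 : Fin d → ℝ) (fun _ => r))).subset
    fun _ hx => ⟨fun i => (hx i).1, fun i => (hx i).2⟩

theorem projection_equal_spacing_general {d : ℕ} (r δ : ℝ)
    (H : Set (EuclideanSpace ℝ (Fin d)))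
    (hH : H = {x | ∀ i, x i ∈ Set.Icc 0 r})
    (C : Set (EuclideanSpace ℝ (Fin d)))
    (hcl : IsClosed C) (hconv : Convex ℝ C) (hCH : C ⊆ H)
    (SH : Set (EuclideanSpace ℝ (Fin d)))
    (hcover : ∀ x ∈ frontier H, ∃ s ∈ SH, ‖x - s‖ ≤ δ)
    (f : EuclideanSpace ℝ (Fin d) → EuclideanSpace ℝ (Fin d))
    (hf : ∀ x, f x ∈ C ∧ ∀ y ∈ C, ‖x - f x‖ ≤ ‖x - y‖) :
    ∀ p ∈ frontier C, ∃ s ∈ SH, ‖p - f s‖ ≤ δ := by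
  have hproj : IsNearestPointMap C f := hf
  intro p hp
  obtain ⟨s₀, hs₀, rfl⟩ := hproj.exists_mem_frontier_apply_eq hconv hCH
    (hH ▸ isBounded_cube d r) (hcl.frontier_subset hp) hp
  obtain ⟨s, hs, hδ⟩ := hcover s₀ hs₀
  exact ⟨s, hs, (hproj.norm_apply_sub_apply_le hconv s₀ s).trans hδ⟩

/-- Equal spacing via closest-point projection: if `S_H` is a `δ`-cover of the
boundary of the hypercube `H = [0,r]^d` and `f` is the closest-point projection
onto a nonempty closed convex `C ⊆ H`, then every boundary point of `C` is within
`δ` of the image `f '' S_H`. -/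
theorem projection_equal_spacing {d : ℕ} (r δ : ℝ) (hr : 0 < r)
    (H : Set (EuclideanSpace ℝ (Fin d)))
    (hH : H = {x | ∀ i, x i ∈ Set.Icc 0 r})
    (C : Set (EuclideanSpace ℝ (Fin d)))
    (hne : C.Nonempty) (hcl : IsClosed C) (hconv : Convex ℝ C) (hCH : C ⊆ H)
    (SH : Set (EuclideanSpace ℝ (Fin d))) (hfin : SH.Finite)
    (hSHsub : SH ⊆ frontier H)
    (hcover : ∀ x ∈ frontier H, ∃ s ∈ SH, ‖x - s‖ ≤ δ)
    (f : EuclideanSpace ℝ (Fin d) → EuclideanSpace ℝ (Fin d))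
    (hf : ∀ x, f x ∈ C ∧ ∀ y ∈ C, ‖x - f x‖ ≤ ‖x - y‖) :
    ∀ p ∈ frontier C, ∃ s ∈ SH, ‖p - f s‖ ≤ δ :=
  projection_equal_spacing_general r δ H hH C hcl hconv hCH SH hcover f hf
end
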